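/- arXiv:1806.09710 — 6 statements merged into one kernel-verified Lean document; each statement's English description precedes it below -/
import Mathlib

section
/- Let ι be a nonempty finite index type, let p, q : ι → ℝ with p_i > 0 and q_i > 0 for all i, and fix λ ∈ (0,1). Then Σ_{i∈ι} p_i^{1-λ} q_i^{λ} = (Σ_{i∈ι} p_i)^{1-λ} · (Σ_{i∈ι} q_i)^{λ} holds if and only if there exists a constant c > 0 with q_i = c · p_i for all i ∈ ι. -/
/-!
Normalise `a = p / ∑ p` and `b = q / ∑ q`; by homogeneity the identity says
`∑ a ^ (1 - λ) * b ^ λ = 1 = ∑ ((1 - λ) * a + λ * b)`. Termwise weighted AM-GM makes every summand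
on the left at most the matching one on the right, with equality exactly when `a i = b i`, so the
sums agree iff `a = b`, i.e. iff `q` is a positive multiple of `p`.
-/

section

open Real Finset

variable {ι : Type*} {s : Finset ι}

theorem sum_div_sum_self {f : ι → ℝ} (h : ∑ j ∈ s, f j ≠ 0) :
    ∑ i ∈ s, f i / ∑ j ∈ s, f j = 1 := by
  rw [← sum_div, div_self h]

theorem sum_rpow_mul_rpow_eq_one_iff {a b : ι → ℝ} {l : ℝ} (ha : ∀ i ∈ s, 0 ≤ a i)
    (hb : ∀ i ∈ s, 0 ≤ b i) (hsa : ∑ i ∈ s, a i = 1) (hsb : ∑ i ∈ s, b i = 1) (hl0 : 0 < l)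
    (hl1 : l < 1) :
    ∑ i ∈ s, a i ^ (1 - l) * b i ^ l = 1 ↔ ∀ i ∈ s, a i = b i := by
  have hw : 1 - l + l = 1 := sub_add_cancel 1 l
  have gap_nonneg : ∀ i ∈ s, 0 ≤ (1 - l) * a i + l * b i - a i ^ (1 - l) * b i ^ l :=
    fun i hi => sub_nonneg.2 <|
      geom_mean_le_arith_mean2_weighted (sub_pos.2 hl1).le hl0.le (ha i hi) (hb i hi) hw
  have gap_sum : ∑ i ∈ s, ((1 - l) * a i + l * b i - a i ^ (1 - l) * b i ^ l)
      = 1 - ∑ i ∈ s, a i ^ (1 - l) * b i ^ l := by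
    rw [sum_sub_distrib, sum_add_distrib, ← mul_sum, ← mul_sum, hsa, hsb, mul_one, mul_one, hw]
  calc ∑ i ∈ s, a i ^ (1 - l) * b i ^ l = 1
      ↔ ∑ i ∈ s, ((1 - l) * a i + l * b i - a i ^ (1 - l) * b i ^ l) = 0 := by
        rw [gap_sum, sub_eq_zero, eq_comm]
    _ ↔ ∀ i ∈ s, (1 - l) * a i + l * b i - a i ^ (1 - l) * b i ^ l = 0 :=
        sum_eq_zero_iff_of_nonneg gap_nonneg
    _ ↔ ∀ i ∈ s, a i = b i := forall₂_congr fun i hi => by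
        rw [sub_eq_zero, eq_comm, geom_mean_eq_arith_mean2_weighted_iff_of_pos (sub_pos.2 hl1) hl0
          (ha i hi) (hb i hi) hw]

theorem sum_div_rpow_mul_div_rpow {p q : ι → ℝ} {P Q : ℝ} (hp : ∀ i ∈ s, 0 ≤ p i)
    (hq : ∀ i ∈ s, 0 ≤ q i) (hP : 0 ≤ P) (hQ : 0 ≤ Q) (l : ℝ) :
    ∑ i ∈ s, (p i / P) ^ (1 - l) * (q i / Q) ^ l
      = (∑ i ∈ s, p i ^ (1 - l) * q i ^ l) / (P ^ (1 - l) * Q ^ l) := by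
  rw [sum_div]
  refine sum_congr rfl fun i hi => ?_
  rw [div_rpow (hp i hi) hP, div_rpow (hq i hi) hQ, div_mul_div_comm]

theorem forall_div_sum_eq_div_sum_iff {p q : ι → ℝ} (hP : 0 < ∑ j ∈ s, p j)
    (hQ : 0 < ∑ j ∈ s, q j) :
    (∀ i ∈ s, p i / ∑ j ∈ s, p j = q i / ∑ j ∈ s, q j) ↔
      ∃ c, 0 < c ∧ ∀ i ∈ s, q i = c * p i := by
  constructor
  · intro h
    refine ⟨(∑ j ∈ s, q j) / ∑ j ∈ s, p j, div_pos hQ hP, fun i hi => ?_⟩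
    rw [div_mul_comm, h i hi, div_mul_cancel₀ _ hQ.ne']
  · rintro ⟨c, hc, hqc⟩ i hi
    rw [sum_congr rfl hqc, ← mul_sum, hqc i hi, mul_div_mul_left _ _ hc.ne']

end

/-- Equality condition in the geometric-convexity inequality: for positive vectors
`p, q` on a nonempty finite index type and `λ ∈ (0,1)`,
`∑ i, p i ^ (1-λ) * q i ^ λ = (∑ i, p i) ^ (1-λ) * (∑ i, q i) ^ λ` iff
`q = c • p` for some constant `c > 0`. -/
theorem sum_rpow_mul_rpow_eq_iff_proportional
    (ι : Type*) [Fintype ι] [Nonempty ι]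
    (p q : ι → ℝ) (hp : ∀ i, 0 < p i) (hq : ∀ i, 0 < q i)
    (l : ℝ) (hl : l ∈ Set.Ioo (0 : ℝ) 1) :
    (∑ i, p i ^ (1 - l) * q i ^ l = (∑ i, p i) ^ (1 - l) * (∑ i, q i) ^ l)
      ↔ ∃ c : ℝ, 0 < c ∧ ∀ i, q i = c * p i := by
  obtain ⟨hl0, hl1⟩ := hl
  have hP : 0 < ∑ i, p i := Finset.sum_pos (fun i _ => hp i) Finset.univ_nonempty
  have hQ : 0 < ∑ i, q i := Finset.sum_pos (fun i _ => hq i) Finset.univ_nonempty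
  rw [← div_eq_one_iff_eq (by positivity),
    ← sum_div_rpow_mul_div_rpow (fun i _ => (hp i).le) (fun i _ => (hq i).le) hP.le hQ.le,
    sum_rpow_mul_rpow_eq_one_iff (fun i _ => (div_pos (hp i) hP).le)
      (fun i _ => (div_pos (hq i) hQ).le) (sum_div_sum_self hP.ne') (sum_div_sum_self hQ.ne')
      hl0 hl1,
    forall_div_sum_eq_div_sum_iff hP hQ]
  simp only [Finset.mem_univ, true_implies]
end

section
/- Let ι be a finite index type and let p, q : ι → ℝ be positive probability vectors, i.e. p_i > 0, q_i > 0 for all i, Σ_i p_i = 1 and Σ_i q_i = 1. If p ≠ q, then Σ_{i∈ι} p_i^{1/2} q_i^{1/2} < 1; consequently, the infimum over λ ∈ (0,1) of Σ_{i∈ι} p_i^{1-λ} q_i^{λ} is strictly less than 1. -/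
lemma bhatt_aux_le {a b : ℝ} (ha : 0 < a) (hb : 0 < b) :
    a ^ ((1 : ℝ) / 2) * b ^ ((1 : ℝ) / 2) ≤ (a + b) / 2 := by
  rw [← Real.sqrt_eq_rpow, ← Real.sqrt_eq_rpow]
  nlinarith [sq_nonneg (Real.sqrt a - Real.sqrt b), Real.sq_sqrt ha.le, Real.sq_sqrt hb.le]

lemma bhatt_aux_lt {a b : ℝ} (ha : 0 < a) (hb : 0 < b) (hab : a ≠ b) :
    a ^ ((1 : ℝ) / 2) * b ^ ((1 : ℝ) / 2) < (a + b) / 2 := by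
  rw [← Real.sqrt_eq_rpow, ← Real.sqrt_eq_rpow]
  have hs : Real.sqrt a ≠ Real.sqrt b := fun h =>
    hab ((Real.sqrt_inj ha.le hb.le).mp h)
  have h2 : (0 : ℝ) < (Real.sqrt a - Real.sqrt b) ^ 2 := by
    have : Real.sqrt a - Real.sqrt b ≠ 0 := sub_ne_zero.mpr hs
    positivity
  nlinarith [Real.sq_sqrt ha.le, Real.sq_sqrt hb.le]

/-- For distinct positive probability vectors `p, q` on a finite index type,
the Bhattacharyya coefficient `∑ i, p i ^ (1/2) * q i ^ (1/2)` is strictly less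
than `1`; consequently the infimum over `λ ∈ (0,1)` of `∑ i, p i ^ (1-λ) * q i ^ λ`
is strictly less than `1`. -/
theorem bhattacharyya_lt_one_of_ne
    (ι : Type*) [Fintype ι]
    (p q : ι → ℝ) (hp : ∀ i, 0 < p i) (hq : ∀ i, 0 < q i)
    (hpsum : ∑ i, p i = 1) (hqsum : ∑ i, q i = 1)
    (hne : p ≠ q) :
    (∑ i, p i ^ ((1 : ℝ) / 2) * q i ^ ((1 : ℝ) / 2) < 1) ∧
    sInf ((fun l : ℝ => ∑ i, p i ^ (1 - l) * q i ^ l) '' Set.Ioo (0 : ℝ) 1) < 1 := by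
  obtain ⟨j, hj⟩ := Function.ne_iff.mp hne
  have key : ∑ i, p i ^ ((1 : ℝ) / 2) * q i ^ ((1 : ℝ) / 2) < 1 := by
    have hlt : ∑ i, p i ^ ((1 : ℝ) / 2) * q i ^ ((1 : ℝ) / 2)
        < ∑ i, (p i + q i) / 2 := by
      apply Finset.sum_lt_sum (fun i _ => bhatt_aux_le (hp i) (hq i))
      exact ⟨j, Finset.mem_univ j, bhatt_aux_lt (hp j) (hq j) hj⟩
    have : ∑ i, (p i + q i) / 2 = 1 := by
      rw [← Finset.sum_div, Finset.sum_add_distrib, hpsum, hqsum]; norm_num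
    linarith
  refine ⟨key, ?_⟩
  have hmem : ∑ i, p i ^ ((1 : ℝ) / 2) * q i ^ ((1 : ℝ) / 2) ∈
      ((fun l : ℝ => ∑ i, p i ^ (1 - l) * q i ^ l) '' Set.Ioo (0 : ℝ) 1) := by
    refine ⟨1/2, by norm_num, ?_⟩
    norm_num
  have hbdd : BddBelow ((fun l : ℝ => ∑ i, p i ^ (1 - l) * q i ^ l) '' Set.Ioo (0 : ℝ) 1) := by
    refine ⟨0, ?_⟩
    rintro x ⟨l, _, rfl⟩
    exact Finset.sum_nonneg fun i _ =>
      mul_nonneg (Real.rpow_nonneg (hp i).le _) (Real.rpow_nonneg (hq i).le _)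
  exact lt_of_le_of_lt (csInf_le hbdd hmem) key
end

section
/- Let k ≥ 1 and ρ ≥ 1 be natural numbers and let p', q' : Fin (k·ρ) → ℝ be positive vectors (p'_j > 0, q'_j > 0 for all j). Define the block-aggregated vectors p, q : Fin k → ℝ by p_r = Σ_{i=0}^{ρ-1} p'_{rρ+i} and q_r = Σ_{i=0}^{ρ-1} q'_{rρ+i}. Then for every λ ∈ (0,1), Σ_{r=0}^{k-1} p_r^{1-λ} q_r^{λ} ≥ Σ_{j=0}^{kρ-1} p'_j^{1-λ} q'_j^{λ}. -/
/-- The index `r*ρ + i` of the `i`-th fine quantizer cell inside the `r`-th coarse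
block, as an element of `Fin (k * ρ)`. -/
def blockIdx {k ρ : ℕ} (r : Fin k) (i : Fin ρ) : Fin (k * ρ) :=
  ⟨r.val * ρ + i.val, by
    have h1 : r.val * ρ + i.val < (r.val + 1) * ρ := by
      rw [Nat.succ_mul]; exact Nat.add_lt_add_left i.isLt _
    exact lt_of_lt_of_le h1 (Nat.mul_le_mul_right ρ r.isLt)⟩

/-!
On each block, Hölder's inequality with the conjugate exponents `1/(1-λ)` and `1/λ`, applied to
`p'^(1-λ)` and `q'^λ`, bounds the fine sum by `p_r^(1-λ) q_r^λ`; the fine sum over `Fin (kρ)` is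
the sum of these block sums because `(r, i) ↦ rρ + i` enumerates `Fin (kρ)`.
-/

open Finset

theorem Real.sum_rpow_one_sub_mul_rpow_le {ι : Type*} (s : Finset ι) {f g : ι → ℝ}
    (hf : ∀ i ∈ s, 0 ≤ f i) (hg : ∀ i ∈ s, 0 ≤ g i) {l : ℝ} (hl : l ∈ Set.Ioo (0 : ℝ) 1) :
    ∑ i ∈ s, f i ^ (1 - l) * g i ^ l ≤ (∑ i ∈ s, f i) ^ (1 - l) * (∑ i ∈ s, g i) ^ l := by
  obtain ⟨hl₀, hl₁⟩ := hl
  have hconj : (1 - l)⁻¹.HolderConjugate l⁻¹ :=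
    .inv_inv (sub_pos.mpr hl₁) hl₀ (sub_add_cancel 1 l)
  have hpow : ∀ {a x : ℝ}, 0 ≤ x → a ≠ 0 → (x ^ a) ^ a⁻¹ = x := fun hx ha => by
    rw [← Real.rpow_mul hx, mul_inv_cancel₀ ha, Real.rpow_one]
  have holder := Real.inner_le_Lp_mul_Lq_of_nonneg s hconj
    (fun i hi => Real.rpow_nonneg (hf i hi) (1 - l)) (fun i hi => Real.rpow_nonneg (hg i hi) l)
  rwa [sum_congr rfl fun i hi => hpow (hf i hi) (sub_pos.mpr hl₁).ne',
    sum_congr rfl fun i hi => hpow (hg i hi) hl₀.ne', one_div, one_div, inv_inv, inv_inv] at holder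

theorem blockIdx_eq_finProdFinEquiv {k ρ : ℕ} (r : Fin k) (i : Fin ρ) :
    blockIdx r i = finProdFinEquiv (r, i) :=
  Fin.ext <| by simp only [blockIdx, finProdFinEquiv_apply_val]; ring

theorem sum_eq_sum_sum_blockIdx {M : Type*} [AddCommMonoid M] {k ρ : ℕ} (f : Fin (k * ρ) → M) :
    ∑ j, f j = ∑ r : Fin k, ∑ i : Fin ρ, f (blockIdx r i) := by
  simp only [blockIdx_eq_finProdFinEquiv, ← Fintype.sum_prod_type']
  exact (Fintype.sum_equiv finProdFinEquiv _ _ fun _ => rfl).symm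

theorem block_aggregation_chernoff_sum_ge_general
    (k ρ : ℕ)
    (p' q' : Fin (k * ρ) → ℝ)
    (hp' : ∀ j, 0 < p' j) (hq' : ∀ j, 0 < q' j)
    (p q : Fin k → ℝ)
    (hp : ∀ r, p r = ∑ i : Fin ρ, p' (blockIdx r i))
    (hq : ∀ r, q r = ∑ i : Fin ρ, q' (blockIdx r i))
    (l : ℝ) (hl : l ∈ Set.Ioo (0 : ℝ) 1) :
    ∑ r, p r ^ (1 - l) * q r ^ l ≥ ∑ j, p' j ^ (1 - l) * q' j ^ l := by
  rw [sum_eq_sum_sum_blockIdx]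
  refine sum_le_sum fun r _ => ?_
  rw [hp r, hq r]
  exact Real.sum_rpow_one_sub_mul_rpow_le _ (fun _ _ => (hp' _).le) (fun _ _ => (hq' _).le) hl

/-- Merging `ρ` consecutive quantizer cells cannot increase the Chernoff-type
sum: for positive vectors `p', q'` on `Fin (k*ρ)` and their block aggregations
`p, q` on `Fin k`, and every `λ ∈ (0,1)`,
`∑ r, p r ^ (1-λ) * q r ^ λ ≥ ∑ j, p' j ^ (1-λ) * q' j ^ λ`. -/
theorem block_aggregation_chernoff_sum_ge
    (k ρ : ℕ) (hk : 1 ≤ k) (hρ : 1 ≤ ρ)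
    (p' q' : Fin (k * ρ) → ℝ)
    (hp' : ∀ j, 0 < p' j) (hq' : ∀ j, 0 < q' j)
    (p q : Fin k → ℝ)
    (hp : ∀ r, p r = ∑ i : Fin ρ, p' (blockIdx r i))
    (hq : ∀ r, q r = ∑ i : Fin ρ, q' (blockIdx r i))
    (l : ℝ) (hl : l ∈ Set.Ioo (0 : ℝ) 1) :
    ∑ r, p r ^ (1 - l) * q r ^ l ≥ ∑ j, p' j ^ (1 - l) * q' j ^ l :=
  block_aggregation_chernoff_sum_ge_general k ρ p' q' hp' hq' p q hp hq l hl
end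

section
/- Let k ≥ 1 and ρ ≥ 2 be natural numbers and let p', q' : Fin (k·ρ) → ℝ be positive probability vectors (all entries positive, each summing to 1). Define the block-aggregated probability vectors p, q : Fin k → ℝ by p_r = Σ_{i=0}^{ρ-1} p'_{rρ+i} and q_r = Σ_{i=0}^{ρ-1} q'_{rρ+i}. Suppose there exists a block r and indices i, j ∈ {0, ..., ρ-1} with p'_{rρ+i} · q'_{rρ+j} ≠ p'_{rρ+j} · q'_{rρ+i}. Then the Chernoff information strictly increases under refinement: C(p‖q) < C(p'‖q'), i.e. −log(inf_{λ∈(0,1)} Σ_r p_r^{1-λ} q_r^{λ}) < −log(inf_{λ∈(0,1)} Σ_j p'_j^{1-λ} q'_j^{λ}). -/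
/-- The Chernoff information `C(p‖q) = -log (inf_{λ ∈ (0,1)} ∑ i, p i^{1-λ} q i^λ)`
between two positive probability vectors on a finite index type. -/
noncomputable def chernoffInfo {ι : Type*} [Fintype ι] (p q : ι → ℝ) : ℝ :=
  -Real.log (sInf ((fun l : ℝ => ∑ i, p i ^ (1 - l) * q i ^ l) '' Set.Ioo (0 : ℝ) 1))

section Aux
open Real Set Finset

lemma my_geom_lt {x y w : ℝ} (hx : 0 < x) (hy : 0 < y) (hxy : x ≠ y)
    (hw0 : 0 < w) (hw1 : w < 1) : x ^ (1 - w) * y ^ w < (1 - w) * x + w * y := by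
  have h := strictConcaveOn_log_Ioi.2 (Set.mem_Ioi.2 hx) (Set.mem_Ioi.2 hy) hxy
      (by linarith : (0:ℝ) < 1 - w) hw0 (by ring)
  simp only [smul_eq_mul] at h
  have hsum : 0 < (1 - w) * x + w * y := by
    have : 0 < 1 - w := by linarith
    positivity
  have h2 := Real.exp_lt_exp.2 h
  rwa [Real.exp_log hsum, Real.exp_add, mul_comm (1-w) (Real.log x),
    mul_comm w (Real.log y),
    ← Real.rpow_def_of_pos hx, ← Real.rpow_def_of_pos hy] at h2

variable {ι : Type*} [Fintype ι] [Nonempty ι]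

lemma my_holder_aux (a b : ι → ℝ) (ha : ∀ i, 0 < a i) (hb : ∀ i, 0 < b i)
    {w : ℝ} (i : ι) :
    a i ^ (1-w) * b i ^ w =
      ((∑ j, a j) ^ (1-w) * (∑ j, b j) ^ w) *
        ((a i / ∑ j, a j) ^ (1-w) * (b i / ∑ j, b j) ^ w) := by
  have hA : 0 < ∑ j, a j := Finset.sum_pos (fun i _ => ha i) Finset.univ_nonempty
  have hB : 0 < ∑ j, b j := Finset.sum_pos (fun i _ => hb i) Finset.univ_nonempty
  have e1 : a i ^ (1-w) = (∑ j, a j) ^ (1-w) * (a i / ∑ j, a j) ^ (1-w) := by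
    rw [← Real.mul_rpow hA.le (div_nonneg (ha i).le hA.le)]
    congr 1
    field_simp
  have e2 : b i ^ w = (∑ j, b j) ^ w * (b i / ∑ j, b j) ^ w := by
    rw [← Real.mul_rpow hB.le (div_nonneg (hb i).le hB.le)]
    congr 1
    field_simp
  rw [e1, e2]; ring

lemma my_holder_le (a b : ι → ℝ) (ha : ∀ i, 0 < a i) (hb : ∀ i, 0 < b i)
    {w : ℝ} (hw0 : 0 < w) (hw1 : w < 1) :
    ∑ i, a i ^ (1-w) * b i ^ w ≤ (∑ j, a j) ^ (1-w) * (∑ j, b j) ^ w := by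
  have hA : 0 < ∑ j, a j := Finset.sum_pos (fun i _ => ha i) Finset.univ_nonempty
  have hB : 0 < ∑ j, b j := Finset.sum_pos (fun i _ => hb i) Finset.univ_nonempty
  have hC : 0 < (∑ j, a j) ^ (1-w) * (∑ j, b j) ^ w := by positivity
  have hsum : ∑ i, (((∑ j, a j) ^ (1-w) * (∑ j, b j) ^ w) *
      ((1-w) * (a i / ∑ j, a j) + w * (b i / ∑ j, b j)))
      = (∑ j, a j) ^ (1-w) * (∑ j, b j) ^ w := by
    rw [← Finset.mul_sum]
    have h1 : ∑ i, ((1-w) * (a i / ∑ j, a j) + w * (b i / ∑ j, b j)) = 1 := by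
      rw [Finset.sum_add_distrib]
      simp_rw [div_eq_mul_inv, ← Finset.mul_sum, ← Finset.sum_mul]
      rw [mul_inv_cancel₀ hA.ne', mul_inv_cancel₀ hB.ne']
      ring
    rw [h1, mul_one]
  calc ∑ i, a i ^ (1-w) * b i ^ w
      ≤ ∑ i, (((∑ j, a j) ^ (1-w) * (∑ j, b j) ^ w) *
          ((1-w) * (a i / ∑ j, a j) + w * (b i / ∑ j, b j))) := by
        apply Finset.sum_le_sum
        intro i _
        rw [my_holder_aux a b ha hb i]
        apply mul_le_mul_of_nonneg_left _ hC.le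
        exact Real.geom_mean_le_arith_mean2_weighted (by linarith) hw0.le
          (div_nonneg (ha i).le hA.le) (div_nonneg (hb i).le hB.le) (by ring)
    _ = _ := hsum

lemma my_holder_lt (a b : ι → ℝ) (ha : ∀ i, 0 < a i) (hb : ∀ i, 0 < b i)
    {w : ℝ} (hw0 : 0 < w) (hw1 : w < 1)
    (hne : ∃ i j, a i * b j ≠ a j * b i) :
    ∑ i, a i ^ (1-w) * b i ^ w < (∑ j, a j) ^ (1-w) * (∑ j, b j) ^ w := by
  have hA : 0 < ∑ j, a j := Finset.sum_pos (fun i _ => ha i) Finset.univ_nonempty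
  have hB : 0 < ∑ j, b j := Finset.sum_pos (fun i _ => hb i) Finset.univ_nonempty
  have hC : 0 < (∑ j, a j) ^ (1-w) * (∑ j, b j) ^ w := by positivity
  obtain ⟨i₁, j₁, hne⟩ := hne
  have hex : ∃ i₀ : ι, a i₀ / ∑ j, a j ≠ b i₀ / ∑ j, b j := by
    by_contra hcon
    push_neg at hcon
    apply hne
    have h1 := hcon i₁
    have h2 := hcon j₁
    rw [div_eq_div_iff hA.ne' hB.ne'] at h1 h2
    have hmain : a i₁ * b j₁ * ((∑ j, a j) * (∑ j, b j)) =
        a j₁ * b i₁ * ((∑ j, a j) * (∑ j, b j)) := by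
      linear_combination (b j₁ * (∑ j, a j)) * h1 - (b i₁ * (∑ j, a j)) * h2
    exact mul_right_cancel₀ (by positivity) hmain
  obtain ⟨i₀, hi₀⟩ := hex
  have hsum : ∑ i, (((∑ j, a j) ^ (1-w) * (∑ j, b j) ^ w) *
      ((1-w) * (a i / ∑ j, a j) + w * (b i / ∑ j, b j)))
      = (∑ j, a j) ^ (1-w) * (∑ j, b j) ^ w := by
    rw [← Finset.mul_sum]
    have h1 : ∑ i, ((1-w) * (a i / ∑ j, a j) + w * (b i / ∑ j, b j)) = 1 := by
      rw [Finset.sum_add_distrib]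
      simp_rw [div_eq_mul_inv, ← Finset.mul_sum, ← Finset.sum_mul]
      rw [mul_inv_cancel₀ hA.ne', mul_inv_cancel₀ hB.ne']
      ring
    rw [h1, mul_one]
  calc ∑ i, a i ^ (1-w) * b i ^ w
      < ∑ i, (((∑ j, a j) ^ (1-w) * (∑ j, b j) ^ w) *
          ((1-w) * (a i / ∑ j, a j) + w * (b i / ∑ j, b j))) := by
        apply Finset.sum_lt_sum
        · intro i _
          rw [my_holder_aux a b ha hb i]
          apply mul_le_mul_of_nonneg_left _ hC.le
          exact Real.geom_mean_le_arith_mean2_weighted (by linarith) hw0.le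
            (div_nonneg (ha i).le hA.le) (div_nonneg (hb i).le hB.le) (by ring)
        · refine ⟨i₀, Finset.mem_univ _, ?_⟩
          rw [my_holder_aux a b ha hb i₀]
          apply mul_lt_mul_of_pos_left _ hC
          exact my_geom_lt (div_pos (ha i₀) hA) (div_pos (hb i₀) hB) hi₀ hw0 hw1
  _ = _ := hsum

lemma my_sum_block {k ρ : ℕ} (g : Fin (k*ρ) → ℝ) :
    ∑ j, g j = ∑ r : Fin k, ∑ i : Fin ρ, g (blockIdx r i) := by
  have hbij : Function.Bijective (fun x : Fin k × Fin ρ => blockIdx x.1 x.2) := by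
    rw [Fintype.bijective_iff_injective_and_card]
    refine ⟨?_, by simp⟩
    rintro ⟨r, i⟩ ⟨r', i'⟩ h
    have hv : r.val * ρ + i.val = r'.val * ρ + i'.val := congrArg Fin.val h
    have hρ0 : 0 < ρ := i.pos
    have hdiv : ∀ (s : Fin k) (t : Fin ρ), (s.val * ρ + t.val) / ρ = s.val := by
      intro s t
      rw [mul_comm, Nat.mul_add_div hρ0, Nat.div_eq_of_lt t.isLt, add_zero]
    have hr : r.val = r'.val := by
      rw [← hdiv r i, ← hdiv r' i', hv]
    have hi : i.val = i'.val := by rw [hr] at hv; exact Nat.add_left_cancel hv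
    simp [Prod.ext_iff, Fin.ext_iff, hr, hi]
  calc ∑ j, g j = ∑ x : Fin k × Fin ρ, g (blockIdx x.1 x.2) :=
        (Fintype.sum_bijective _ hbij _ _ (fun x => rfl)).symm
    _ = _ := Fintype.sum_prod_type _

end Aux

open Real Set Finset in
/-- If within some block the fine cells are not proportional (the classification
task is learnable), merging `ρ ≥ 2` consecutive quantizer levels of positive
probability vectors strictly decreases the Chernoff information:
`C(p‖q) < C(p'‖q')`. -/
theorem block_aggregation_chernoffInfo_lt
    (k ρ : ℕ) (hk : 1 ≤ k) (hρ : 2 ≤ ρ)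
    (p' q' : Fin (k * ρ) → ℝ)
    (hp' : ∀ j, 0 < p' j) (hq' : ∀ j, 0 < q' j)
    (hp'sum : ∑ j, p' j = 1) (hq'sum : ∑ j, q' j = 1)
    (p q : Fin k → ℝ)
    (hp : ∀ r, p r = ∑ i : Fin ρ, p' (blockIdx r i))
    (hq : ∀ r, q r = ∑ i : Fin ρ, q' (blockIdx r i))
    (hlearn : ∃ (r : Fin k) (i j : Fin ρ),
        p' (blockIdx r i) * q' (blockIdx r j) ≠ p' (blockIdx r j) * q' (blockIdx r i)) :
    chernoffInfo p q < chernoffInfo p' q' := by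
  haveI : NeZero k := ⟨by omega⟩
  haveI : NeZero ρ := ⟨by omega⟩
  haveI : NeZero (k * ρ) := ⟨by positivity⟩
  set F : ℝ → ℝ := fun l : ℝ => ∑ r, p r ^ (1 - l) * q r ^ l with hF
  set F' : ℝ → ℝ := fun l : ℝ => ∑ j, p' j ^ (1 - l) * q' j ^ l with hF'
  -- positivity of coarse vectors
  have hpr : ∀ r, 0 < p r := fun r => by
    rw [hp r]; exact Finset.sum_pos (fun i _ => hp' _) Finset.univ_nonempty
  have hqr : ∀ r, 0 < q r := fun r => by
    rw [hq r]; exact Finset.sum_pos (fun i _ => hq' _) Finset.univ_nonempty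
  have hpsum : ∑ r, p r = 1 := by
    simp_rw [hp]; rw [← my_sum_block]; exact hp'sum
  have hqsum : ∑ r, q r = 1 := by
    simp_rw [hq]; rw [← my_sum_block]; exact hq'sum
  -- pointwise strict inequality
  have hlt : ∀ l ∈ Set.Ioo (0:ℝ) 1, F' l < F l := by
    rintro l ⟨hl0, hl1⟩
    obtain ⟨r₀, hlearn⟩ := hlearn
    rw [hF, hF']
    simp only
    rw [my_sum_block (fun j => p' j ^ (1-l) * q' j ^ l)]
    apply Finset.sum_lt_sum
    · intro r _
      rw [hp r, hq r]
      exact my_holder_le _ _ (fun i => hp' _) (fun i => hq' _) hl0 hl1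
    · refine ⟨r₀, Finset.mem_univ _, ?_⟩
      rw [hp r₀, hq r₀]
      exact my_holder_lt _ _ (fun i => hp' _) (fun i => hq' _) hl0 hl1 hlearn
  -- continuity of F
  have hcont : Continuous F := by
    apply continuous_finset_sum
    intro r _
    have h1 : Continuous fun t : ℝ => p r ^ t :=
      continuous_iff_continuousAt.2 fun t => Real.continuousAt_const_rpow (hpr r).ne'
    have h2 : Continuous fun t : ℝ => q r ^ t :=
      continuous_iff_continuousAt.2 fun t => Real.continuousAt_const_rpow (hqr r).ne'
    exact (h1.comp (continuous_const.sub continuous_id)).mul h2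
  -- images
  have hSne : ((fun l : ℝ => ∑ r, p r ^ (1 - l) * q r ^ l) '' Set.Ioo 0 1).Nonempty :=
    ⟨F (1/2), ⟨1/2, by norm_num, rfl⟩⟩
  have hS'ne : ((fun l : ℝ => ∑ j, p' j ^ (1 - l) * q' j ^ l) '' Set.Ioo 0 1).Nonempty :=
    ⟨F' (1/2), ⟨1/2, by norm_num, rfl⟩⟩
  -- minimizer of F on [0,1]
  obtain ⟨ls, hls, hmin⟩ := isCompact_Icc.exists_isMinOn (Set.nonempty_Icc.2 zero_le_one)
    hcont.continuousOn
  have hmin' : ∀ x ∈ Set.Icc (0:ℝ) 1, F ls ≤ F x := fun x hx => hmin hx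
  -- choose a good interior point
  have hkey : ∃ l₀ ∈ Set.Ioo (0:ℝ) 1,
      F l₀ ≤ sInf ((fun l : ℝ => ∑ r, p r ^ (1 - l) * q r ^ l) '' Set.Ioo 0 1) := by
    by_cases hin : ls ∈ Set.Ioo (0:ℝ) 1
    · refine ⟨ls, hin, le_csInf hSne ?_⟩
      rintro x ⟨l, hl, rfl⟩
      exact hmin' l (Set.Ioo_subset_Icc_self hl)
    · have hend : F ls = 1 := by
        have : ls = 0 ∨ ls = 1 := by
          rcases hls with ⟨h0, h1⟩
          rcases lt_or_ge 0 ls with h | h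
          · right; by_contra h'; exact hin ⟨h, lt_of_le_of_ne h1 h'⟩
          · left; linarith
        rcases this with h | h <;> subst h <;> rw [hF] <;> simp only
        · simp [Real.rpow_zero, Real.rpow_one, hpsum]
        · simp [Real.rpow_zero, Real.rpow_one, hqsum]
      refine ⟨1/2, by norm_num, ?_⟩
      have h12 : F (1/2) ≤ 1 := by
        rw [hF]; simp only
        calc ∑ r, p r ^ (1-(1/2:ℝ)) * q r ^ (1/2:ℝ)
            ≤ (∑ r, p r) ^ (1-(1/2:ℝ)) * (∑ r, q r) ^ (1/2:ℝ) :=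
              my_holder_le _ _ hpr hqr (by norm_num) (by norm_num)
          _ = 1 := by rw [hpsum, hqsum]; simp
      refine h12.trans (le_csInf hSne ?_)
      rintro x ⟨l, hl, rfl⟩
      calc (1:ℝ) = F ls := hend.symm
        _ ≤ F l := hmin' l (Set.Ioo_subset_Icc_self hl)
  obtain ⟨l₀, hl₀, hFl₀⟩ := hkey
  -- lower bound for F'
  set c : ℝ := ∑ j, min (p' j) (q' j) with hc
  have hcpos : 0 < c :=
    Finset.sum_pos (fun j _ => lt_min (hp' j) (hq' j)) Finset.univ_nonempty
  have hlb : ∀ x ∈ ((fun l : ℝ => ∑ j, p' j ^ (1 - l) * q' j ^ l) '' Set.Ioo 0 1), c ≤ x := by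
    rintro x ⟨l, ⟨hl0, hl1⟩, rfl⟩
    apply Finset.sum_le_sum
    intro j _
    have hm : 0 < min (p' j) (q' j) := lt_min (hp' j) (hq' j)
    calc min (p' j) (q' j)
        = min (p' j) (q' j) ^ (1-l) * min (p' j) (q' j) ^ l := by
          rw [← Real.rpow_add hm]; simp
      _ ≤ p' j ^ (1-l) * q' j ^ l := by
          apply mul_le_mul
          · exact Real.rpow_le_rpow hm.le (min_le_left _ _) (by linarith)
          · exact Real.rpow_le_rpow hm.le (min_le_right _ _) hl0.le
          · exact Real.rpow_nonneg hm.le _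
          · exact Real.rpow_nonneg (hp' j).le _
  have hbdd : BddBelow ((fun l : ℝ => ∑ j, p' j ^ (1 - l) * q' j ^ l) '' Set.Ioo 0 1) :=
    ⟨c, hlb⟩
  have hA'pos : 0 < sInf ((fun l : ℝ => ∑ j, p' j ^ (1 - l) * q' j ^ l) '' Set.Ioo 0 1) :=
    lt_of_lt_of_le hcpos (le_csInf hS'ne hlb)
  have hA'le : sInf ((fun l : ℝ => ∑ j, p' j ^ (1 - l) * q' j ^ l) '' Set.Ioo 0 1) ≤ F' l₀ :=
    csInf_le hbdd ⟨l₀, hl₀, rfl⟩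
  have hfin : sInf ((fun l : ℝ => ∑ j, p' j ^ (1 - l) * q' j ^ l) '' Set.Ioo 0 1)
      < sInf ((fun l : ℝ => ∑ r, p r ^ (1 - l) * q r ^ l) '' Set.Ioo 0 1) :=
    lt_of_le_of_lt hA'le (lt_of_lt_of_le (hlt l₀ hl₀) hFl₀)
  unfold chernoffInfo
  exact neg_lt_neg (Real.log_lt_log hA'pos hfin)
end

section
/- Let ρ ≥ 2 and m ≥ 1 be natural numbers. Let p', q' : Fin (2·ρ) → ℝ be positive probability vectors and a, b : Fin m → ℝ be positive probability vectors. Define the two-level aggregated vectors p, q : Fin 2 → ℝ by p_r = Σ_{i=0}^{ρ-1} p'_{rρ+i}, q_r = Σ_{i=0}^{ρ-1} q'_{rρ+i}, and joint vectors P'(j,x) = p'_j a_x, Q'(j,x) = q'_j b_x on Fin (2ρ) × Fin m and P(r,x) = p_r a_x, Q(r,x) = q_r b_x on Fin 2 × Fin m. Suppose there exists a block r ∈ {0,1} and indices i, j ∈ {0,...,ρ-1} with p'_{rρ+i} · q'_{rρ+j} ≠ p'_{rρ+j} · q'_{rρ+i}. Then C(P‖Q) < C(P'‖Q'): the Chernoff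 information of the joint class-conditional distributions with a binary (black-box) quantizer is strictly smaller than with the (2ρ > 2)-level (interpretable) quantizer. -/
/-!
The Chernoff coefficient `λ ↦ ∑ P^{1-λ} Q^λ` is multiplicative over independent components,
so the human's observation contributes the same positive factor on both sides and only the
quantizer outputs need to be compared. Merging the fine cells of a block into one coarse cell
can only increase the coefficient, by Hölder's inequality
`∑ u^{1-λ} v^λ ≤ (∑ u)^{1-λ} (∑ v)^λ`, strictly when `u` and `v` are not proportional on the
block. For probability vectors the coefficient is continuous in `λ`, equals `1` at `λ = 0, 1`
and is at most `1` in between, so its infimum over `(0, 1)` is attained; hence the pointwise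
strict inequality survives passing to the infima, and `-log` reverses it.
-/

open Real Finset

noncomputable def chernoffCoeff {ι : Type*} [Fintype ι] (p q : ι → ℝ) (l : ℝ) : ℝ :=
  ∑ i, p i ^ (1 - l) * q i ^ l

def IsPosProbVec {ι : Type*} [Fintype ι] (p : ι → ℝ) : Prop :=
  (∀ i, 0 < p i) ∧ ∑ i, p i = 1

lemma chernoffInfo_eq {ι : Type*} [Fintype ι] (p q : ι → ℝ) :
    chernoffInfo p q = -log (sInf (chernoffCoeff p q '' Set.Ioo 0 1)) :=
  rfl

section ChernoffCoeff

variable {ι κ : Type*} [Fintype ι] [Fintype κ] {p q u v : ι → ℝ} {l : ℝ}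

lemma IsPosProbVec.nonneg (hp : IsPosProbVec p) (i : ι) : 0 ≤ p i :=
  (hp.1 i).le

lemma chernoffCoeff_pos [Nonempty ι] (hp : ∀ i, 0 < p i) (hq : ∀ i, 0 < q i) :
    0 < chernoffCoeff p q l :=
  sum_pos (fun i _ => mul_pos (rpow_pos_of_pos (hp i) _) (rpow_pos_of_pos (hq i) _))
    univ_nonempty

lemma chernoffCoeff_zero_right (hp : ∑ i, p i = 1) : chernoffCoeff p q 0 = 1 := by
  simpa [chernoffCoeff] using hp

lemma chernoffCoeff_one_right (hq : ∑ i, q i = 1) : chernoffCoeff p q 1 = 1 := by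
  simpa [chernoffCoeff] using hq

lemma continuous_chernoffCoeff (hp : ∀ i, 0 < p i) (hq : ∀ i, 0 < q i) :
    Continuous (chernoffCoeff p q) :=
  continuous_finsetSum _ fun i _ =>
    (continuous_const.rpow (continuous_const.sub continuous_id) fun _ => .inl (hp i).ne').mul
      (continuous_const.rpow continuous_id fun _ => .inl (hq i).ne')

lemma sum_fst_mul_snd (u : ι → ℝ) (v : κ → ℝ) :
    ∑ z : ι × κ, u z.1 * v z.2 = (∑ i, u i) * ∑ x, v x := by
  rw [Fintype.sum_prod_type, Fintype.sum_mul_sum]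

lemma IsPosProbVec.prod {a : κ → ℝ} (hp : IsPosProbVec p) (ha : IsPosProbVec a) :
    IsPosProbVec fun z : ι × κ => p z.1 * a z.2 :=
  ⟨fun z => mul_pos (hp.1 _) (ha.1 _), by rw [sum_fst_mul_snd, hp.2, ha.2, one_mul]⟩

lemma chernoffCoeff_prod {a b : κ → ℝ} (hp : ∀ i, 0 ≤ p i) (hq : ∀ i, 0 ≤ q i)
    (ha : ∀ x, 0 ≤ a x) (hb : ∀ x, 0 ≤ b x) :
    chernoffCoeff (fun z : ι × κ => p z.1 * a z.2) (fun z => q z.1 * b z.2) l =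
      chernoffCoeff p q l * chernoffCoeff a b l := by
  simp only [chernoffCoeff, Fintype.sum_mul_sum, Fintype.sum_prod_type,
    mul_rpow (hp _) (ha _), mul_rpow (hq _) (hb _)]
  exact sum_congr rfl fun _ _ => sum_congr rfl fun _ _ => by ring

lemma chernoffCoeff_smul {c d : ℝ} (hc : 0 ≤ c) (hd : 0 ≤ d) (hu : ∀ i, 0 ≤ u i)
    (hv : ∀ i, 0 ≤ v i) :
    chernoffCoeff (c • u) (d • v) l = c ^ (1 - l) * d ^ l * chernoffCoeff u v l := by
  simp only [chernoffCoeff, Pi.smul_apply, smul_eq_mul, mul_rpow hc (hu _), mul_rpow hd (hv _),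
    mul_sum]
  exact sum_congr rfl fun _ _ => by ring

lemma chernoffCoeff_le_one (hu : ∀ i, 0 ≤ u i) (hv : ∀ i, 0 ≤ v i) (hu1 : ∑ i, u i = 1)
    (hv1 : ∑ i, v i = 1) (hl : l ∈ Set.Icc 0 1) : chernoffCoeff u v l ≤ 1 :=
  calc chernoffCoeff u v l ≤ ∑ i, ((1 - l) * u i + l * v i) :=
        sum_le_sum fun i _ => geom_mean_le_arith_mean2_weighted (by linarith [hl.2]) hl.1
          (hu i) (hv i) (by ring)
    _ = 1 := by rw [sum_add_distrib, ← mul_sum, ← mul_sum, hu1, hv1]; ring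

lemma chernoffCoeff_lt_one (hu : ∀ i, 0 ≤ u i) (hv : ∀ i, 0 ≤ v i) (hu1 : ∑ i, u i = 1)
    (hv1 : ∑ i, v i = 1) (hl : l ∈ Set.Ioo 0 1) (huv : u ≠ v) : chernoffCoeff u v l < 1 := by
  obtain ⟨i, hi⟩ := Function.ne_iff.1 huv
  calc chernoffCoeff u v l < ∑ i, ((1 - l) * u i + l * v i) :=
        sum_lt_sum
          (fun i _ => geom_mean_le_arith_mean2_weighted (by linarith [hl.2]) hl.1.le
            (hu i) (hv i) (by ring))
          ⟨i, mem_univ _, (geom_mean_lt_arith_mean2_weighted_iff_of_pos (by linarith [hl.2]) hl.1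
            (hu i) (hv i) (by ring)).2 hi⟩
    _ = 1 := by rw [sum_add_distrib, ← mul_sum, ← mul_sum, hu1, hv1]; ring

lemma chernoffCoeff_eq_mul_chernoffCoeff_normalize (hu : ∀ i, 0 ≤ u i) (hv : ∀ i, 0 ≤ v i)
    (hU : 0 < ∑ i, u i) (hV : 0 < ∑ i, v i) :
    chernoffCoeff u v l = (∑ i, u i) ^ (1 - l) * (∑ i, v i) ^ l *
      chernoffCoeff ((∑ i, u i)⁻¹ • u) ((∑ i, v i)⁻¹ • v) l := by
  conv_lhs => rw [← smul_inv_smul₀ hU.ne' u, ← smul_inv_smul₀ hV.ne' v]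
  exact chernoffCoeff_smul hU.le hV.le (fun i => mul_nonneg (inv_nonneg.2 hU.le) (hu i))
    (fun i => mul_nonneg (inv_nonneg.2 hV.le) (hv i))

lemma sum_inv_sum_smul (hU : ∑ i, u i ≠ 0) : ∑ i, ((∑ i, u i)⁻¹ • u) i = 1 := by
  simp only [Pi.smul_apply, smul_eq_mul, ← mul_sum, inv_mul_cancel₀ hU]

lemma chernoffCoeff_le_rpow_mul_rpow [Nonempty ι] (hu : ∀ i, 0 < u i) (hv : ∀ i, 0 < v i)
    (hl : l ∈ Set.Icc 0 1) :
    chernoffCoeff u v l ≤ (∑ i, u i) ^ (1 - l) * (∑ i, v i) ^ l := by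
  have hU : 0 < ∑ i, u i := sum_pos (fun i _ => hu i) univ_nonempty
  have hV : 0 < ∑ i, v i := sum_pos (fun i _ => hv i) univ_nonempty
  rw [chernoffCoeff_eq_mul_chernoffCoeff_normalize (fun i => (hu i).le) (fun i => (hv i).le) hU hV]
  refine mul_le_of_le_one_right (by positivity) (chernoffCoeff_le_one
    (fun i => mul_nonneg (inv_nonneg.2 hU.le) (hu i).le)
    (fun i => mul_nonneg (inv_nonneg.2 hV.le) (hv i).le)
    (sum_inv_sum_smul hU.ne') (sum_inv_sum_smul hV.ne') hl)

lemma chernoffCoeff_lt_rpow_mul_rpow [Nonempty ι] (hu : ∀ i, 0 < u i) (hv : ∀ i, 0 < v i)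
    (huv : ∃ i j, u i * v j ≠ u j * v i) (hl : l ∈ Set.Ioo 0 1) :
    chernoffCoeff u v l < (∑ i, u i) ^ (1 - l) * (∑ i, v i) ^ l := by
  have hU : 0 < ∑ i, u i := sum_pos (fun i _ => hu i) univ_nonempty
  have hV : 0 < ∑ i, v i := sum_pos (fun i _ => hv i) univ_nonempty
  have hne : (∑ i, u i)⁻¹ • u ≠ (∑ i, v i)⁻¹ • v := by
    obtain ⟨i, j, hij⟩ := huv
    intro h
    have hi := congrFun h i
    have hj := congrFun h j
    simp only [Pi.smul_apply, smul_eq_mul] at hi hj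
    field_simp at hi hj
    exact hij (mul_right_cancel₀ hV.ne' (by linear_combination v j * hi - v i * hj))
  rw [chernoffCoeff_eq_mul_chernoffCoeff_normalize (fun i => (hu i).le) (fun i => (hv i).le) hU hV]
  refine mul_lt_of_lt_one_right (by positivity) (chernoffCoeff_lt_one
    (fun i => mul_nonneg (inv_nonneg.2 hU.le) (hu i).le)
    (fun i => mul_nonneg (inv_nonneg.2 hV.le) (hv i).le)
    (sum_inv_sum_smul hU.ne') (sum_inv_sum_smul hV.ne') hl hne)

lemma exists_isLeast_chernoffCoeff (hp : IsPosProbVec p) (hq : IsPosProbVec q) :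
    ∃ l ∈ Set.Ioo 0 1, IsLeast (chernoffCoeff p q '' Set.Ioo 0 1) (chernoffCoeff p q l) := by
  obtain ⟨l₀, hl₀, hmin⟩ := isCompact_Icc.exists_isMinOn (Set.nonempty_Icc.2 zero_le_one)
    (continuous_chernoffCoeff hp.1 hq.1).continuousOn
  by_cases hl₀' : l₀ ∈ Set.Ioo 0 1
  · exact ⟨l₀, hl₀', Set.mem_image_of_mem _ hl₀',
      Set.forall_mem_image.2 fun w hw => hmin (Set.Ioo_subset_Icc_self hw)⟩
  have hend : chernoffCoeff p q l₀ = 1 := by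
    have hl₀'' : l₀ ∈ Set.Icc 0 1 \ Set.Ioo 0 1 := ⟨hl₀, hl₀'⟩
    rw [Set.Icc_sdiff_Ioo_same zero_le_one] at hl₀''
    obtain rfl | rfl := hl₀''
    exacts [chernoffCoeff_zero_right hp.2, chernoffCoeff_one_right hq.2]
  -- an endpoint minimum equals `1`, which the midpoint value does not exceed
  have hhalf : (1 / 2 : ℝ) ∈ Set.Ioo 0 1 := by norm_num
  refine ⟨1 / 2, hhalf, Set.mem_image_of_mem _ hhalf, Set.forall_mem_image.2 fun w hw => ?_⟩
  calc chernoffCoeff p q (1 / 2)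
      ≤ 1 := chernoffCoeff_le_one hp.nonneg hq.nonneg hp.2 hq.2
          (Set.Ioo_subset_Icc_self hhalf)
    _ = chernoffCoeff p q l₀ := hend.symm
    _ ≤ chernoffCoeff p q w := hmin (Set.Ioo_subset_Icc_self hw)

theorem chernoffInfo_lt_of_chernoffCoeff_lt {p' q' : κ → ℝ} (hp : IsPosProbVec p)
    (hq : IsPosProbVec q) (hp' : IsPosProbVec p') (hq' : IsPosProbVec q')
    (h : ∀ l ∈ Set.Ioo 0 1, chernoffCoeff p' q' l < chernoffCoeff p q l) :
    chernoffInfo p q < chernoffInfo p' q' := by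
  obtain ⟨l, hl, hleast⟩ := exists_isLeast_chernoffCoeff hp hq
  obtain ⟨l', -, hleast'⟩ := exists_isLeast_chernoffCoeff hp' hq'
  have : Nonempty κ := (nonempty_of_sum_ne_zero (hp'.2.trans_ne one_ne_zero)).to_type
  rw [chernoffInfo_eq, chernoffInfo_eq, hleast.csInf_eq, hleast'.csInf_eq]
  exact neg_lt_neg (log_lt_log (chernoffCoeff_pos hp'.1 hq'.1)
    ((hleast'.2 (Set.mem_image_of_mem _ hl)).trans_lt (h l hl)))

end ChernoffCoeff

section Blocks

variable {k ρ : ℕ}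

def blockSum (p : Fin (k * ρ) → ℝ) (r : Fin k) : ℝ :=
  ∑ i, p (blockIdx r i)

lemma sum_blockIdx {M : Type*} [AddCommMonoid M] (g : Fin (k * ρ) → M) :
    ∑ r, ∑ i, g (blockIdx r i) = ∑ j, g j := by
  rw [← Fintype.sum_prod_type']
  exact Fintype.sum_equiv finProdFinEquiv _ _ fun z =>
    congrArg g (Fin.ext (by simp [blockIdx, finProdFinEquiv, Nat.mul_comm, Nat.add_comm]))

lemma sum_blockSum (p : Fin (k * ρ) → ℝ) : ∑ r, blockSum p r = ∑ j, p j :=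
  sum_blockIdx p

lemma IsPosProbVec.blockSum [NeZero ρ] {p : Fin (k * ρ) → ℝ} (hp : IsPosProbVec p) :
    IsPosProbVec (blockSum p) :=
  ⟨fun _ => sum_pos (fun _ _ => hp.1 _) univ_nonempty, (sum_blockSum p).trans hp.2⟩

lemma chernoffCoeff_lt_chernoffCoeff_blockSum {p q : Fin (k * ρ) → ℝ} {l : ℝ}
    (hp : ∀ j, 0 < p j) (hq : ∀ j, 0 < q j)
    (hpq : ∃ (r : Fin k) (i j : Fin ρ),
      p (blockIdx r i) * q (blockIdx r j) ≠ p (blockIdx r j) * q (blockIdx r i))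
    (hl : l ∈ Set.Ioo 0 1) :
    chernoffCoeff p q l < chernoffCoeff (blockSum p) (blockSum q) l := by
  obtain ⟨r, i, j, hij⟩ := hpq
  have : Nonempty (Fin ρ) := ⟨i⟩
  calc chernoffCoeff p q l
      = ∑ r, chernoffCoeff (fun i => p (blockIdx r i)) (fun i => q (blockIdx r i)) l :=
        (sum_blockIdx _).symm
    _ < chernoffCoeff (blockSum p) (blockSum q) l :=
        sum_lt_sum (fun r _ => chernoffCoeff_le_rpow_mul_rpow (fun _ => hp _) (fun _ => hq _)
            (Set.Ioo_subset_Icc_self hl))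
          ⟨r, mem_univ _, chernoffCoeff_lt_rpow_mul_rpow (fun _ => hp _) (fun _ => hq _)
            ⟨i, j, hij⟩ hl⟩

end Blocks

/-- Black box versus interpretable classifier: with the human's conditionally
independent observation (class-conditional distributions `a, b`), if some merged
block is non-proportional, the Chernoff information of the joint class-conditional
distributions with a binary (2-level, black-box) quantizer is strictly smaller
than with the `2ρ > 2`-level (interpretable) quantizer: `C(P‖Q) < C(P'‖Q')`. -/
theorem blackbox_vs_interpretable_chernoffInfo_lt
    (ρ m : ℕ) (hρ : 2 ≤ ρ) (hm : 1 ≤ m)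
    (p' q' : Fin (2 * ρ) → ℝ)
    (hp' : ∀ j, 0 < p' j) (hq' : ∀ j, 0 < q' j)
    (hp'sum : ∑ j, p' j = 1) (hq'sum : ∑ j, q' j = 1)
    (a b : Fin m → ℝ)
    (ha : ∀ x, 0 < a x) (hb : ∀ x, 0 < b x)
    (hasum : ∑ x, a x = 1) (hbsum : ∑ x, b x = 1)
    (p q : Fin 2 → ℝ)
    (hp : ∀ r, p r = ∑ i : Fin ρ, p' (blockIdx r i))
    (hq : ∀ r, q r = ∑ i : Fin ρ, q' (blockIdx r i))
    (P' Q' : Fin (2 * ρ) × Fin m → ℝ)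
    (hP' : ∀ z, P' z = p' z.1 * a z.2) (hQ' : ∀ z, Q' z = q' z.1 * b z.2)
    (P Q : Fin 2 × Fin m → ℝ)
    (hP : ∀ z, P z = p z.1 * a z.2) (hQ : ∀ z, Q z = q z.1 * b z.2)
    (hlearn : ∃ (r : Fin 2) (i j : Fin ρ),
        p' (blockIdx r i) * q' (blockIdx r j) ≠ p' (blockIdx r j) * q' (blockIdx r i)) :
    chernoffInfo P Q < chernoffInfo P' Q' := by
  obtain rfl : P = fun z => p z.1 * a z.2 := funext hP
  obtain rfl : Q = fun z => q z.1 * b z.2 := funext hQ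
  obtain rfl : P' = fun z => p' z.1 * a z.2 := funext hP'
  obtain rfl : Q' = fun z => q' z.1 * b z.2 := funext hQ'
  obtain rfl : p = blockSum p' := funext hp
  obtain rfl : q = blockSum q' := funext hq
  have : NeZero ρ := ⟨by omega⟩
  have : NeZero m := ⟨by omega⟩
  have hp'v : IsPosProbVec p' := ⟨hp', hp'sum⟩
  have hq'v : IsPosProbVec q' := ⟨hq', hq'sum⟩
  have hav : IsPosProbVec a := ⟨ha, hasum⟩
  have hbv : IsPosProbVec b := ⟨hb, hbsum⟩
  refine chernoffInfo_lt_of_chernoffCoeff_lt (hp'v.blockSum.prod hav) (hq'v.blockSum.prod hbv)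
    (hp'v.prod hav) (hq'v.prod hbv) fun l hl => ?_
  rw [chernoffCoeff_prod hp'v.blockSum.nonneg hq'v.blockSum.nonneg hav.nonneg hbv.nonneg,
    chernoffCoeff_prod hp'v.nonneg hq'v.nonneg hav.nonneg hbv.nonneg]
  exact mul_lt_mul_of_pos_right (chernoffCoeff_lt_chernoffCoeff_blockSum hp' hq' hlearn hl)
    (chernoffCoeff_pos ha hb)
end

section
/- Let μ and ν be Borel probability measures on ℝ, let k ≥ 1 and ρ ≥ 2 be natural numbers, and set k' = ρ·k. For r = 1,...,k let p_r = μ([(r-1)/k, r/k)) and q_r = ν([(r-1)/k, r/k)), and for i = 1,...,k' let p'_i = μ([(i-1)/k', i/k')) and q'_i = ν([(i-1)/k', i/k')). Assume p'_i > 0 and q'_i > 0 for all i, that Σ_{i=1}^{k'} p'_i = 1 and Σ_{i=1}^{k'} q'_i = 1 (all the mass lies in [0,1)), and that there exist a coarse cell r and two fine indices i, j lying in it with p'_i · q'_j ≠ p'_j · q'_i. Then −log(inf_{λ∈(0,1)} Σ_{r=1}^{k} p_r^{1-λ} q_r^{λ}) < −log(inf_{λ∈(0,1)} Σ_{i=1}^{k'}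 p'_i^{1-λ} q'_i^{λ}). -/
open MeasureTheory

private lemma amgm2_strict {w1 w2 p1 p2 : ℝ} (hw1 : 0 < w1) (hw2 : 0 < w2) (hw : w1 + w2 = 1)
    (hp1 : 0 < p1) (hp2 : 0 < p2) (hne : p1 ≠ p2) :
    p1 ^ w1 * p2 ^ w2 < w1 * p1 + w2 * p2 := by
  have h := strictConcaveOn_log_Ioi.2 (Set.mem_Ioi.2 hp1) (Set.mem_Ioi.2 hp2) hne hw1 hw2 hw
  simp only [smul_eq_mul] at h
  have hpos : 0 < w1 * p1 + w2 * p2 := by positivity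
  calc p1 ^ w1 * p2 ^ w2
      = Real.exp (w1 * Real.log p1 + w2 * Real.log p2) := by
        rw [Real.rpow_def_of_pos hp1, Real.rpow_def_of_pos hp2, ← Real.exp_add,
          mul_comm (Real.log p1), mul_comm (Real.log p2)]
    _ < Real.exp (Real.log (w1 * p1 + w2 * p2)) := Real.exp_lt_exp.2 h
    _ = w1 * p1 + w2 * p2 := Real.exp_log hpos

section Holder

variable {ι : Type*} {s : Finset ι} {a b : ι → ℝ} {l : ℝ}

private lemma holder_term_eq (hs : s.Nonempty)
    (ha : ∀ i ∈ s, 0 < a i) (hb : ∀ i ∈ s, 0 < b i) (hl0 : 0 < l) (hl1 : l < 1) :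
    ∀ i ∈ s, a i ^ (1 - l) * b i ^ l
      = ((∑ i ∈ s, a i) ^ (1 - l) * (∑ i ∈ s, b i) ^ l)
        * ((a i / ∑ i ∈ s, a i) ^ (1 - l) * (b i / ∑ i ∈ s, b i) ^ l) := by
  intro i hi
  have hA : (0:ℝ) < ∑ i ∈ s, a i := Finset.sum_pos ha hs
  have hB : (0:ℝ) < ∑ i ∈ s, b i := Finset.sum_pos hb hs
  have hA' : ((∑ i ∈ s, a i) : ℝ) ^ (1 - l) ≠ 0 := (Real.rpow_pos_of_pos hA _).ne'
  have hB' : ((∑ i ∈ s, b i) : ℝ) ^ l ≠ 0 := (Real.rpow_pos_of_pos hB _).ne'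
  rw [Real.div_rpow (ha i hi).le hA.le, Real.div_rpow (hb i hi).le hB.le]
  field_simp

private lemma holder_sum_eq (hs : s.Nonempty)
    (ha : ∀ i ∈ s, 0 < a i) (hb : ∀ i ∈ s, 0 < b i) :
    ∑ i ∈ s, ((∑ i ∈ s, a i) ^ (1 - l) * (∑ i ∈ s, b i) ^ l)
        * ((1 - l) * (a i / ∑ i ∈ s, a i) + l * (b i / ∑ i ∈ s, b i))
      = (∑ i ∈ s, a i) ^ (1 - l) * (∑ i ∈ s, b i) ^ l := by
  have hA : (0:ℝ) < ∑ i ∈ s, a i := Finset.sum_pos ha hs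
  have hB : (0:ℝ) < ∑ i ∈ s, b i := Finset.sum_pos hb hs
  have h1 : ∑ i ∈ s, ((1 - l) * (a i / ∑ i ∈ s, a i) + l * (b i / ∑ i ∈ s, b i)) = 1 := by
    rw [Finset.sum_add_distrib, ← Finset.mul_sum, ← Finset.mul_sum, ← Finset.sum_div,
      ← Finset.sum_div, div_self hA.ne', div_self hB.ne']
    ring
  rw [← Finset.mul_sum, h1, mul_one]

private lemma holder_le (hs : s.Nonempty)
    (ha : ∀ i ∈ s, 0 < a i) (hb : ∀ i ∈ s, 0 < b i) (hl0 : 0 < l) (hl1 : l < 1) :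
    ∑ i ∈ s, a i ^ (1 - l) * b i ^ l
      ≤ (∑ i ∈ s, a i) ^ (1 - l) * (∑ i ∈ s, b i) ^ l := by
  have hA : (0:ℝ) < ∑ i ∈ s, a i := Finset.sum_pos ha hs
  have hB : (0:ℝ) < ∑ i ∈ s, b i := Finset.sum_pos hb hs
  have hC : (0:ℝ) < (∑ i ∈ s, a i) ^ (1 - l) * (∑ i ∈ s, b i) ^ l := by
    exact mul_pos (Real.rpow_pos_of_pos hA _) (Real.rpow_pos_of_pos hB _)
  calc ∑ i ∈ s, a i ^ (1 - l) * b i ^ l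
      ≤ ∑ i ∈ s, ((∑ i ∈ s, a i) ^ (1 - l) * (∑ i ∈ s, b i) ^ l)
          * ((1 - l) * (a i / ∑ i ∈ s, a i) + l * (b i / ∑ i ∈ s, b i)) := by
        apply Finset.sum_le_sum
        intro i hi
        rw [holder_term_eq hs ha hb hl0 hl1 i hi]
        exact mul_le_mul_of_nonneg_left
          (Real.geom_mean_le_arith_mean2_weighted (by linarith) hl0.le
            (div_nonneg (ha i hi).le hA.le) (div_nonneg (hb i hi).le hB.le) (by ring)) hC.le
    _ = (∑ i ∈ s, a i) ^ (1 - l) * (∑ i ∈ s, b i) ^ l := holder_sum_eq hs ha hb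

private lemma holder_lt (hs : s.Nonempty)
    (ha : ∀ i ∈ s, 0 < a i) (hb : ∀ i ∈ s, 0 < b i) (hl0 : 0 < l) (hl1 : l < 1)
    (hne : ∃ i ∈ s, ∃ j ∈ s, a i * b j ≠ a j * b i) :
    ∑ i ∈ s, a i ^ (1 - l) * b i ^ l
      < (∑ i ∈ s, a i) ^ (1 - l) * (∑ i ∈ s, b i) ^ l := by
  have hA : (0:ℝ) < ∑ i ∈ s, a i := Finset.sum_pos ha hs
  have hB : (0:ℝ) < ∑ i ∈ s, b i := Finset.sum_pos hb hs
  have hC : (0:ℝ) < (∑ i ∈ s, a i) ^ (1 - l) * (∑ i ∈ s, b i) ^ l := by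
    exact mul_pos (Real.rpow_pos_of_pos hA _) (Real.rpow_pos_of_pos hB _)
  -- find an index where the normalized masses differ
  have hex : ∃ i ∈ s, a i / (∑ i ∈ s, a i) ≠ b i / (∑ i ∈ s, b i) := by
    by_contra hall
    push_neg at hall
    obtain ⟨i, hi, j, hj, hij⟩ := hne
    apply hij
    have h1 : a i * (∑ t ∈ s, b t) = b i * (∑ t ∈ s, a t) := by
      have := hall i hi
      field_simp at this
      linarith [this]
    have h2 : a j * (∑ t ∈ s, b t) = b j * (∑ t ∈ s, a t) := by
      have := hall j hj
      field_simp at this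
      linarith [this]
    have : (a i * b j) * ((∑ t ∈ s, b t) * (∑ t ∈ s, a t))
        = (a j * b i) * ((∑ t ∈ s, b t) * (∑ t ∈ s, a t)) := by
      calc (a i * b j) * ((∑ t ∈ s, b t) * (∑ t ∈ s, a t))
          = (a i * (∑ t ∈ s, b t)) * (b j * (∑ t ∈ s, a t)) := by ring
        _ = (b i * (∑ t ∈ s, a t)) * (a j * (∑ t ∈ s, b t)) := by rw [h1, h2]
        _ = (a j * b i) * ((∑ t ∈ s, b t) * (∑ t ∈ s, a t)) := by ring
    exact mul_right_cancel₀ (mul_pos hB hA).ne' this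
  obtain ⟨i0, hi0, hne0⟩ := hex
  calc ∑ i ∈ s, a i ^ (1 - l) * b i ^ l
      < ∑ i ∈ s, ((∑ i ∈ s, a i) ^ (1 - l) * (∑ i ∈ s, b i) ^ l)
          * ((1 - l) * (a i / ∑ i ∈ s, a i) + l * (b i / ∑ i ∈ s, b i)) := by
        apply Finset.sum_lt_sum
        · intro i hi
          rw [holder_term_eq hs ha hb hl0 hl1 i hi]
          exact mul_le_mul_of_nonneg_left
            (Real.geom_mean_le_arith_mean2_weighted (by linarith) hl0.le
              (div_nonneg (ha i hi).le hA.le) (div_nonneg (hb i hi).le hB.le) (by ring)) hC.le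
        · refine ⟨i0, hi0, ?_⟩
          rw [holder_term_eq hs ha hb hl0 hl1 i0 hi0]
          exact mul_lt_mul_of_pos_left
            (amgm2_strict (by linarith) hl0 (by ring)
              (div_pos (ha i0 hi0) hA) (div_pos (hb i0 hi0) hB) hne0) hC
    _ = (∑ i ∈ s, a i) ^ (1 - l) * (∑ i ∈ s, b i) ^ l := holder_sum_eq hs ha hb

end Holder

/-- Telescoping: the fine-cell masses over a range of consecutive indices sum to the mass
of the corresponding interval. -/
private lemma sum_Ico_cells (μ : Measure ℝ) [IsProbabilityMeasure μ] {K : ℝ} (hK : 0 < K) :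
    ∀ n m : ℕ, m ≤ n →
      ∑ i ∈ Finset.Icc (m + 1) n, (μ (Set.Ico (((i : ℝ) - 1) / K) ((i : ℝ) / K))).toReal
        = (μ (Set.Ico ((m : ℝ) / K) ((n : ℝ) / K))).toReal := by
  intro n
  induction n with
  | zero =>
    intro m hm
    have : m = 0 := Nat.le_zero.mp hm
    subst this
    simp
  | succ n ih =>
    intro m hm
    rcases Nat.lt_or_ge m (n + 1) with h | h
    · have hmn : m ≤ n := Nat.lt_succ_iff.mp h
      rw [← Finset.insert_Icc_right_eq_Icc_add_one (by omega : m + 1 ≤ n + 1),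
        Finset.sum_insert (by simp), ih m hmn]
      have hle1 : (m : ℝ) / K ≤ (n : ℝ) / K := by
        first
        | (gcongr; exact_mod_cast hmn)
        | gcongr
      have hle2 : (n : ℝ) / K ≤ ((n : ℝ) + 1) / K := by
        first
        | (gcongr; linarith)
        | gcongr
      have hmeas : μ (Set.Ico ((m : ℝ) / K) (((n : ℝ) + 1) / K))
          = μ (Set.Ico ((m : ℝ) / K) ((n : ℝ) / K))
            + μ (Set.Ico ((n : ℝ) / K) (((n : ℝ) + 1) / K)) := by
        rw [← Set.Ico_union_Ico_eq_Ico hle1 hle2,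
          measure_union Set.Ico_disjoint_Ico_same measurableSet_Ico]
      have hc1 : ((n + 1 : ℕ) : ℝ) - 1 = (n : ℝ) := by push_cast; ring
      have hc2 : ((n + 1 : ℕ) : ℝ) = (n : ℝ) + 1 := by push_cast; ring
      rw [hc1, hc2, hmeas, ENNReal.toReal_add (measure_ne_top _ _) (measure_ne_top _ _)]
      ring
    · have : m = n + 1 := le_antisymm hm h
      subst this
      rw [Finset.Icc_eq_empty (by omega)]
      simp

/-- Summing block sums over coarse cells gives the total sum over fine cells. -/
private lemma sum_blocks {M : Type*} [AddCommMonoid M] (h : ℕ → M) (ρ : ℕ) :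
    ∀ k : ℕ, ∑ r ∈ Finset.Icc 1 k, ∑ i ∈ Finset.Icc (ρ * (r - 1) + 1) (ρ * r), h i
      = ∑ i ∈ Finset.Icc 1 (ρ * k), h i := by
  intro k
  induction k with
  | zero => simp
  | succ k ih =>
    rw [← Finset.insert_Icc_right_eq_Icc_add_one (by omega : 1 ≤ k + 1),
      Finset.sum_insert (by simp), ih]
    simp only [Nat.add_sub_cancel]
    rw [← Finset.Ico_add_one_right_eq_Icc (ρ * k + 1), ← Finset.Ico_add_one_right_eq_Icc 1 (ρ * k),
      ← Finset.Ico_add_one_right_eq_Icc 1 (ρ * (k + 1)), add_comm]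
    exact Finset.sum_Ico_consecutive h (by omega)
      (Nat.succ_le_succ (Nat.mul_le_mul_left ρ (Nat.le_succ k)))

private lemma cont_rpow {c : ℝ} (hc : 0 < c) : Continuous fun l : ℝ => c ^ l :=
  continuous_iff_continuousAt.2 fun _ => Real.continuousAt_const_rpow hc.ne'

/-- Refinement of the uniform quantizer of the likelihood ratio strictly increases
the Chernoff information between the induced class-conditional distributions:
with `μ, ν` Borel probability measures on `ℝ`, `k' = ρ * k`,
`p, q` (resp. `p', q'`) the cell masses of the `k`-level (resp. `k'`-level)
uniform quantizer on `[0,1)`, all fine cells of positive mass under both measures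
and carrying total mass `1`, and some coarse cell containing two fine cells with
non-proportional masses, the coarse Chernoff information is strictly smaller than
the fine one. -/
theorem quantizer_refinement_chernoffInfo_lt
    (μ ν : Measure ℝ) [IsProbabilityMeasure μ] [IsProbabilityMeasure ν]
    (k ρ : ℕ) (hk : 1 ≤ k) (hρ : 2 ≤ ρ)
    (p q p' q' : ℕ → ℝ)
    (hp : ∀ r, p r = (μ (Set.Ico (((r : ℝ) - 1) / k) ((r : ℝ) / k))).toReal)
    (hq : ∀ r, q r = (ν (Set.Ico (((r : ℝ) - 1) / k) ((r : ℝ) / k))).toReal)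
    (hp' : ∀ i, p' i = (μ (Set.Ico (((i : ℝ) - 1) / ((ρ : ℝ) * k)) ((i : ℝ) / ((ρ : ℝ) * k)))).toReal)
    (hq' : ∀ i, q' i = (ν (Set.Ico (((i : ℝ) - 1) / ((ρ : ℝ) * k)) ((i : ℝ) / ((ρ : ℝ) * k)))).toReal)
    (hp'pos : ∀ i ∈ Finset.Icc 1 (ρ * k), 0 < p' i)
    (hq'pos : ∀ i ∈ Finset.Icc 1 (ρ * k), 0 < q' i)
    (hp'sum : ∑ i ∈ Finset.Icc 1 (ρ * k), p' i = 1)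
    (hq'sum : ∑ i ∈ Finset.Icc 1 (ρ * k), q' i = 1)
    (hlearn : ∃ r ∈ Finset.Icc 1 k, ∃ i ∈ Finset.Icc (ρ * (r - 1) + 1) (ρ * r),
        ∃ j ∈ Finset.Icc (ρ * (r - 1) + 1) (ρ * r), p' i * q' j ≠ p' j * q' i) :
    -Real.log (sInf ((fun l : ℝ =>
        ∑ r ∈ Finset.Icc 1 k, p r ^ (1 - l) * q r ^ l) '' Set.Ioo (0 : ℝ) 1))
      < -Real.log (sInf ((fun l : ℝ =>
        ∑ i ∈ Finset.Icc 1 (ρ * k), p' i ^ (1 - l) * q' i ^ l) '' Set.Ioo (0 : ℝ) 1)) := by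
  have hkpos : (0:ℝ) < (ρ : ℝ) * k := by
    have h1 : (0:ℝ) < (ρ : ℝ) := by exact_mod_cast (by omega : 0 < ρ)
    have h2 : (0:ℝ) < (k : ℝ) := by exact_mod_cast (by omega : 0 < k)
    positivity
  set S := Finset.Icc 1 (ρ * k) with hS
  set B : ℕ → Finset ℕ := fun r => Finset.Icc (ρ * (r - 1) + 1) (ρ * r) with hB
  have hSne : S.Nonempty := ⟨1, by simp [hS]; nlinarith [Nat.mul_le_mul hρ hk]⟩
  have hBsub : ∀ r ∈ Finset.Icc 1 k, ∀ i ∈ B r, i ∈ S := by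
    intro r hr i hi
    simp only [hB, hS, Finset.mem_Icc] at *
    refine ⟨by omega, le_trans hi.2 (Nat.mul_le_mul_left ρ hr.2)⟩
  have hBne : ∀ r ∈ Finset.Icc 1 k, (B r).Nonempty := by
    intro r hr
    simp only [Finset.mem_Icc] at hr
    refine ⟨ρ * (r - 1) + 1, Finset.mem_Icc.mpr ⟨le_refl _, ?_⟩⟩
    calc ρ * (r - 1) + 1 ≤ ρ * (r - 1) + ρ := by omega
      _ = ρ * (r - 1 + 1) := by rw [Nat.mul_add, mul_one]
      _ = ρ * r := by rw [Nat.sub_add_cancel hr.1]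
  -- block decomposition of coarse masses
  have hpblock : ∀ r ∈ Finset.Icc 1 k, p r = ∑ i ∈ B r, p' i := by
    intro r hr
    simp only [Finset.mem_Icc] at hr
    have hmn : ρ * (r - 1) ≤ ρ * r := Nat.mul_le_mul_left ρ (by omega)
    have htel := sum_Ico_cells μ (K := (ρ : ℝ) * k) hkpos (ρ * r) (ρ * (r - 1)) hmn
    have hcast1 : ((ρ * (r - 1) : ℕ) : ℝ) / ((ρ : ℝ) * k) = ((r : ℝ) - 1) / (k : ℝ) := by
      rw [Nat.cast_mul, Nat.cast_sub hr.1, Nat.cast_one,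
        mul_div_mul_left _ _ (by exact_mod_cast (by omega : ρ ≠ 0) : (ρ:ℝ) ≠ 0)]
    have hcast2 : ((ρ * r : ℕ) : ℝ) / ((ρ : ℝ) * k) = (r : ℝ) / (k : ℝ) := by
      rw [Nat.cast_mul,
        mul_div_mul_left _ _ (by exact_mod_cast (by omega : ρ ≠ 0) : (ρ:ℝ) ≠ 0)]
    rw [hp r, hB]
    calc (μ (Set.Ico (((r : ℝ) - 1) / k) ((r : ℝ) / k))).toReal
        = (μ (Set.Ico (((ρ * (r - 1) : ℕ) : ℝ) / ((ρ : ℝ) * k))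
            (((ρ * r : ℕ) : ℝ) / ((ρ : ℝ) * k)))).toReal := by rw [hcast1, hcast2]
      _ = ∑ i ∈ Finset.Icc (ρ * (r - 1) + 1) (ρ * r),
            (μ (Set.Ico (((i : ℝ) - 1) / ((ρ : ℝ) * k)) ((i : ℝ) / ((ρ : ℝ) * k)))).toReal :=
          htel.symm
      _ = ∑ i ∈ Finset.Icc (ρ * (r - 1) + 1) (ρ * r), p' i :=
          Finset.sum_congr rfl fun i _ => (hp' i).symm
  have hqblock : ∀ r ∈ Finset.Icc 1 k, q r = ∑ i ∈ B r, q' i := by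
    intro r hr
    simp only [Finset.mem_Icc] at hr
    have hmn : ρ * (r - 1) ≤ ρ * r := Nat.mul_le_mul_left ρ (by omega)
    have htel := sum_Ico_cells ν (K := (ρ : ℝ) * k) hkpos (ρ * r) (ρ * (r - 1)) hmn
    have hcast1 : ((ρ * (r - 1) : ℕ) : ℝ) / ((ρ : ℝ) * k) = ((r : ℝ) - 1) / (k : ℝ) := by
      rw [Nat.cast_mul, Nat.cast_sub hr.1, Nat.cast_one,
        mul_div_mul_left _ _ (by exact_mod_cast (by omega : ρ ≠ 0) : (ρ:ℝ) ≠ 0)]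
    have hcast2 : ((ρ * r : ℕ) : ℝ) / ((ρ : ℝ) * k) = (r : ℝ) / (k : ℝ) := by
      rw [Nat.cast_mul,
        mul_div_mul_left _ _ (by exact_mod_cast (by omega : ρ ≠ 0) : (ρ:ℝ) ≠ 0)]
    rw [hq r, hB]
    calc (ν (Set.Ico (((r : ℝ) - 1) / k) ((r : ℝ) / k))).toReal
        = (ν (Set.Ico (((ρ * (r - 1) : ℕ) : ℝ) / ((ρ : ℝ) * k))
            (((ρ * r : ℕ) : ℝ) / ((ρ : ℝ) * k)))).toReal := by rw [hcast1, hcast2]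
      _ = ∑ i ∈ Finset.Icc (ρ * (r - 1) + 1) (ρ * r),
            (ν (Set.Ico (((i : ℝ) - 1) / ((ρ : ℝ) * k)) ((i : ℝ) / ((ρ : ℝ) * k)))).toReal :=
          htel.symm
      _ = ∑ i ∈ Finset.Icc (ρ * (r - 1) + 1) (ρ * r), q' i :=
          Finset.sum_congr rfl fun i _ => (hq' i).symm
  have hppos : ∀ r ∈ Finset.Icc 1 k, 0 < p r := fun r hr => by
    rw [hpblock r hr]
    exact Finset.sum_pos (fun i hi => hp'pos i (hBsub r hr i hi)) (hBne r hr)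
  have hqpos : ∀ r ∈ Finset.Icc 1 k, 0 < q r := fun r hr => by
    rw [hqblock r hr]
    exact Finset.sum_pos (fun i hi => hq'pos i (hBsub r hr i hi)) (hBne r hr)
  set G : ℝ → ℝ := fun l => ∑ i ∈ S, p' i ^ (1 - l) * q' i ^ l with hGdef
  set F : ℝ → ℝ := fun l => ∑ r ∈ Finset.Icc 1 k, p r ^ (1 - l) * q r ^ l with hFdef
  -- F strictly dominates G on the open interval
  have hGF : ∀ l ∈ Set.Ioo (0:ℝ) 1, G l < F l := by
    intro l hl
    obtain ⟨hl0, hl1⟩ := hl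
    have hrw : G l = ∑ r ∈ Finset.Icc 1 k, ∑ i ∈ B r, p' i ^ (1 - l) * q' i ^ l := by
      rw [hGdef]
      exact (sum_blocks (fun i => p' i ^ (1 - l) * q' i ^ l) ρ k).symm
    rw [hrw, hFdef]
    apply Finset.sum_lt_sum
    · intro r hr
      rw [hpblock r hr, hqblock r hr]
      exact holder_le (hBne r hr) (fun i hi => hp'pos i (hBsub r hr i hi))
        (fun i hi => hq'pos i (hBsub r hr i hi)) hl0 hl1
    · obtain ⟨r, hr, i, hi, j, hj, hne⟩ := hlearn
      refine ⟨r, hr, ?_⟩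
      rw [hpblock r hr, hqblock r hr]
      exact holder_lt (hBne r hr) (fun i hi => hp'pos i (hBsub r hr i hi))
        (fun i hi => hq'pos i (hBsub r hr i hi)) hl0 hl1 ⟨i, hi, j, hj, hne⟩
  -- G (1/2) < 1
  have hGhalf : G (1/2) < 1 := by
    obtain ⟨r, hr, i, hi, j, hj, hne⟩ := hlearn
    have := holder_lt (s := S) hSne hp'pos hq'pos (l := 1/2) (by norm_num) (by norm_num)
      ⟨i, hBsub r hr i hi, j, hBsub r hr j hj, hne⟩
    rw [hp'sum, hq'sum, Real.one_rpow, Real.one_rpow, mul_one] at this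
    exact this
  -- endpoint values
  have hG0 : G 0 = 1 := by
    rw [hGdef]
    calc ∑ i ∈ S, p' i ^ (1 - (0:ℝ)) * q' i ^ (0:ℝ)
        = ∑ i ∈ S, p' i := Finset.sum_congr rfl fun i _ => by
          rw [sub_zero, Real.rpow_one, Real.rpow_zero, mul_one]
      _ = 1 := hp'sum
  have hG1 : G 1 = 1 := by
    rw [hGdef]
    calc ∑ i ∈ S, p' i ^ (1 - (1:ℝ)) * q' i ^ (1:ℝ)
        = ∑ i ∈ S, q' i := Finset.sum_congr rfl fun i _ => by
          rw [sub_self, Real.rpow_zero, Real.rpow_one, one_mul]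
      _ = 1 := hq'sum
  have hF0 : F 0 = 1 := by
    rw [hFdef]
    calc ∑ r ∈ Finset.Icc 1 k, p r ^ (1 - (0:ℝ)) * q r ^ (0:ℝ)
        = ∑ r ∈ Finset.Icc 1 k, p r := Finset.sum_congr rfl fun r _ => by
          rw [sub_zero, Real.rpow_one, Real.rpow_zero, mul_one]
      _ = ∑ r ∈ Finset.Icc 1 k, ∑ i ∈ B r, p' i := Finset.sum_congr rfl hpblock
      _ = ∑ i ∈ S, p' i := sum_blocks p' ρ k
      _ = 1 := hp'sum
  have hF1 : F 1 = 1 := by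
    rw [hFdef]
    calc ∑ r ∈ Finset.Icc 1 k, p r ^ (1 - (1:ℝ)) * q r ^ (1:ℝ)
        = ∑ r ∈ Finset.Icc 1 k, q r := Finset.sum_congr rfl fun r _ => by
          rw [sub_self, Real.rpow_zero, Real.rpow_one, one_mul]
      _ = ∑ r ∈ Finset.Icc 1 k, ∑ i ∈ B r, q' i := Finset.sum_congr rfl hqblock
      _ = ∑ i ∈ S, q' i := sum_blocks q' ρ k
      _ = 1 := hq'sum
  -- continuity
  have hGc : Continuous G := by
    rw [hGdef]
    exact continuous_finset_sum _ fun i hi =>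
      ((cont_rpow (hp'pos i hi)).comp (continuous_const.sub continuous_id)).mul
        (cont_rpow (hq'pos i hi))
  have hFc : Continuous F := by
    rw [hFdef]
    exact continuous_finset_sum _ fun r hr =>
      ((cont_rpow (hppos r hr)).comp (continuous_const.sub continuous_id)).mul
        (cont_rpow (hqpos r hr))
  -- minimizers on [0,1]
  obtain ⟨ls, hls, hlsmin⟩ := isCompact_Icc.exists_isMinOn (s := Set.Icc (0:ℝ) 1)
    ⟨0, by norm_num⟩ hGc.continuousOn
  obtain ⟨ms, hms, hmsmin⟩ := isCompact_Icc.exists_isMinOn (s := Set.Icc (0:ℝ) 1)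
    ⟨0, by norm_num⟩ hFc.continuousOn
  have hlsmin' : ∀ x ∈ Set.Icc (0:ℝ) 1, G ls ≤ G x := fun x hx => hlsmin hx
  have hmsmin' : ∀ x ∈ Set.Icc (0:ℝ) 1, F ms ≤ F x := fun x hx => hmsmin hx
  have hGls_lt1 : G ls < 1 :=
    lt_of_le_of_lt (hlsmin' (1/2) (by norm_num)) hGhalf
  have hls_mem : ls ∈ Set.Ioo (0:ℝ) 1 := by
    obtain ⟨h0, h1⟩ := hls
    refine ⟨lt_of_le_of_ne h0 ?_, lt_of_le_of_ne h1 ?_⟩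
    · intro h
      rw [← h, hG0] at hGls_lt1
      exact lt_irrefl _ hGls_lt1
    · intro h
      rw [h, hG1] at hGls_lt1
      exact lt_irrefl _ hGls_lt1
  have hGpos : ∀ l : ℝ, 0 < G l := fun l =>
    Finset.sum_pos (fun i hi => mul_pos (Real.rpow_pos_of_pos (hp'pos i hi) _)
      (Real.rpow_pos_of_pos (hq'pos i hi) _)) hSne
  -- identify the infima
  have hbdd : BddBelow (G '' Set.Ioo 0 1) := by
    refine ⟨0, ?_⟩
    rintro x ⟨l, _, rfl⟩
    exact (hGpos l).le
  have hIG_le : sInf (G '' Set.Ioo 0 1) ≤ G ls :=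
    csInf_le hbdd (Set.mem_image_of_mem G hls_mem)
  have hIG_ge : G ls ≤ sInf (G '' Set.Ioo 0 1) := by
    apply le_csInf (Set.Nonempty.image G ⟨ls, hls_mem⟩)
    rintro x ⟨l, hl, rfl⟩
    exact hlsmin' l (Set.Ioo_subset_Icc_self hl)
  have hIG : sInf (G '' Set.Ioo 0 1) = G ls := le_antisymm hIG_le hIG_ge
  have hIF_ge : F ms ≤ sInf (F '' Set.Ioo 0 1) := by
    apply le_csInf (Set.Nonempty.image F ⟨1/2, by norm_num⟩)
    rintro x ⟨l, hl, rfl⟩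
    exact hmsmin' l (Set.Ioo_subset_Icc_self hl)
  have hkey : G ls < F ms := by
    by_cases hms' : ms ∈ Set.Ioo (0:ℝ) 1
    · exact lt_of_le_of_lt (hlsmin' ms (Set.Ioo_subset_Icc_self hms')) (hGF ms hms')
    · obtain ⟨h0, h1⟩ := hms
      have : ms = 0 ∨ ms = 1 := by
        rcases eq_or_lt_of_le h0 with h | h
        · exact Or.inl h.symm
        · rcases eq_or_lt_of_le h1 with h' | h'
          · exact Or.inr h'
          · exact absurd ⟨h, h'⟩ hms'
      rcases this with h | h
      · rw [h, hF0]; exact hGls_lt1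
      · rw [h, hF1]; exact hGls_lt1
  have hfin : sInf (G '' Set.Ioo 0 1) < sInf (F '' Set.Ioo 0 1) := by
    rw [hIG]
    exact lt_of_lt_of_le hkey hIF_ge
  have hpos : 0 < sInf (G '' Set.Ioo 0 1) := by
    rw [hIG]; exact hGpos ls
  exact neg_lt_neg (Real.log_lt_log hpos hfin)
end
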